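/- arXiv:0911.1141 — 5 statements merged into one kernel-verified Lean document; each statement's English description precedes it below -/
import Mathlib

section
/- Let γ₁₂, γ₂₁ be class-K functions with γ₁₂∘γ₂₁(s) < s for all s > 0. Suppose nonnegative reals b₁, b₂ satisfy b₁ ≤ max{γ₁₂(b₂), c₁} and b₂ ≤ max{γ₂₁(b₁), c₂} for some nonnegative constants c₁, c₂. Then b₁ ≤ max{γ₁₂(c₂), c₁} and b₂ ≤ max{γ₂₁(c₁), c₂}. -/
open NNReal

/-! Substituting the second bound into the first gives
`b₁ ≤ max (γ₁₂ (γ₂₁ b₁)) (max (γ₁₂ c₂) c₁)`, and the small-gain condition excludes the first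
alternative unless `b₁ = 0`. For `b₂` the same argument needs `γ₂₁ ∘ γ₁₂` to contract, which
follows from the contraction of `γ₁₂ ∘ γ₂₁` by applying the strictly monotone `γ₁₂`. -/

def ClassK (γ : ℝ≥0 → ℝ≥0) : Prop := Continuous γ ∧ StrictMono γ ∧ γ 0 = 0

section SmallGain

variable {α : Type*} [LinearOrder α] [OrderBot α] {f g : α → α}

theorem le_of_le_max_of_forall_lt_self (hf : ∀ s, ⊥ < s → f s < s) {b c : α}
    (hb : b ≤ max (f b) c) : b ≤ c := by
  rcases eq_bot_or_bot_lt b with rfl | hpos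
  · exact bot_le
  · exact (le_max_iff.mp hb).resolve_left (hf b hpos).not_ge

theorem forall_comp_lt_self_swap (hf : StrictMono f) (hfg : ∀ s, ⊥ < s → f (g s) < s) :
    ∀ s, ⊥ < s → g (f s) < s := by
  intro s hs
  by_contra! hle
  have hcontr : f (g (f s)) < f s := hfg (f s) (bot_le.trans_lt (hf hs))
  exact (hf.monotone hle).not_gt hcontr

theorem le_max_of_le_max_of_comp_lt_self (hf : Monotone f) (hfg : ∀ s, ⊥ < s → f (g s) < s)
    {b₁ b₂ c₁ c₂ : α} (hb₁ : b₁ ≤ max (f b₂) c₁) (hb₂ : b₂ ≤ max (g b₁) c₂) :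
    b₁ ≤ max (f c₂) c₁ := by
  refine le_of_le_max_of_forall_lt_self hfg ?_
  calc b₁ ≤ max (f b₂) c₁ := hb₁
    _ ≤ max (f (max (g b₁) c₂)) c₁ := max_le_max_right c₁ (hf hb₂)
    _ = max (f (g b₁)) (max (f c₂) c₁) := by rw [hf.map_max, max_assoc]

end SmallGain

theorem smallgain_fixed_point_elimination (γ₁₂ γ₂₁ : ℝ≥0 → ℝ≥0)
    (h₁₂ : ClassK γ₁₂) (h₂₁ : ClassK γ₂₁)
    (hsg : ∀ s : ℝ≥0, 0 < s → γ₁₂ (γ₂₁ s) < s)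
    (b₁ b₂ c₁ c₂ : ℝ≥0)
    (hb₁ : b₁ ≤ max (γ₁₂ b₂) c₁) (hb₂ : b₂ ≤ max (γ₂₁ b₁) c₂) :
    b₁ ≤ max (γ₁₂ c₂) c₁ ∧ b₂ ≤ max (γ₂₁ c₁) c₂ :=
  ⟨le_max_of_le_max_of_comp_lt_self h₁₂.2.1.monotone hsg hb₁ hb₂,
    le_max_of_le_max_of_comp_lt_self h₂₁.2.1.monotone
      (forall_comp_lt_self_swap h₁₂.2.1 hsg) hb₂ hb₁⟩
end

section
/- Let γ₁₂, γ₁₃, γ₂₁, γ₂₃, γ₃₁, γ₃₂ be class-K functions satisfying the cyclic small-gain conditions: γ₁₂∘γ₂₁ < id, γ₁₃∘γ₃₁ < id, γ₂₃∘γ₃₂ < id, γ₁₂∘γ₂₃∘γ₃₁ < id, and γ₁₃∘γ₃₂∘γ₂₁ < id (all meaning strict inequality pointwise for s > 0). Define γ̃₁₂(s) = max{γ₁₂(s), γ₁₃∘γ₃₂(s)} and γ̃₂₁(s) = max{γ₂₁(s), γ₂₃∘γ₃₁(s)}. Then γ̃₁₂∘γ̃₂₁(s) < s for all s > 0. -/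
open NNReal

theorem reduced_smallgain_condition
    (γ₁₂ γ₁₃ γ₂₁ γ₂₃ γ₃₁ γ₃₂ : ℝ≥0 → ℝ≥0)
    (h₁₂ : ClassK γ₁₂) (h₁₃ : ClassK γ₁₃) (h₂₁ : ClassK γ₂₁)
    (h₂₃ : ClassK γ₂₃) (h₃₁ : ClassK γ₃₁) (h₃₂ : ClassK γ₃₂)
    (hsg₁ : ∀ s : ℝ≥0, 0 < s → γ₁₂ (γ₂₁ s) < s)
    (hsg₂ : ∀ s : ℝ≥0, 0 < s → γ₁₃ (γ₃₁ s) < s)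
    (hsg₃ : ∀ s : ℝ≥0, 0 < s → γ₂₃ (γ₃₂ s) < s)
    (hsg₄ : ∀ s : ℝ≥0, 0 < s → γ₁₂ (γ₂₃ (γ₃₁ s)) < s)
    (hsg₅ : ∀ s : ℝ≥0, 0 < s → γ₁₃ (γ₃₂ (γ₂₁ s)) < s) :
    ∀ s : ℝ≥0, 0 < s →
      (fun x => max (γ₁₂ x) (γ₁₃ (γ₃₂ x)))
        ((fun x => max (γ₂₁ x) (γ₂₃ (γ₃₁ x))) s) < s := by
  intro s hs
  simp only
  obtain ⟨_, m₁₂, z₁₂⟩ := h₁₂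
  obtain ⟨_, m₁₃, z₁₃⟩ := h₁₃
  obtain ⟨_, m₂₃, z₂₃⟩ := h₂₃
  obtain ⟨_, m₃₁, z₃₁⟩ := h₃₁
  obtain ⟨_, m₃₂, z₃₂⟩ := h₃₂
  have h31pos : 0 < γ₃₁ s := by
    have := m₃₁ hs; rwa [z₃₁] at this
  -- key: γ₃₂ (γ₂₃ y) < y for y > 0
  have key : ∀ y : ℝ≥0, 0 < y → γ₃₂ (γ₂₃ y) < y := by
    intro y hy
    by_contra h
    push_neg at h
    have h23pos : 0 < γ₂₃ y := by have := m₂₃ hy; rwa [z₂₃] at this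
    have := hsg₃ (γ₂₃ y) h23pos
    have h2 := m₂₃.monotone h
    exact absurd (lt_of_le_of_lt h2 this) (lt_irrefl _)
  rw [max_lt_iff]
  constructor
  · calc γ₁₂ (max (γ₂₁ s) (γ₂₃ (γ₃₁ s)))
        = max (γ₁₂ (γ₂₁ s)) (γ₁₂ (γ₂₃ (γ₃₁ s))) := m₁₂.monotone.map_max
      _ < s := max_lt (hsg₁ s hs) (hsg₄ s hs)
  · have : γ₁₃ (γ₃₂ (max (γ₂₁ s) (γ₂₃ (γ₃₁ s))))
        = max (γ₁₃ (γ₃₂ (γ₂₁ s))) (γ₁₃ (γ₃₂ (γ₂₃ (γ₃₁ s)))) := by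
      rw [m₃₂.monotone.map_max, m₁₃.monotone.map_max]
    rw [this]
    refine max_lt (hsg₅ s hs) ?_
    calc γ₁₃ (γ₃₂ (γ₂₃ (γ₃₁ s))) ≤ γ₁₃ (γ₃₁ s) :=
          m₁₃.monotone (key (γ₃₁ s) h31pos).le
      _ < s := hsg₂ s hs
end

section
/- Suppose nonnegative reals b₁, b₂, b₃ and constants u₁, u₂, u₃ ≥ 0 satisfy b₁ ≤ max{γ₁₂(b₂), γ₁₃(b₃), u₁}, b₂ ≤ max{γ₂₁(b₁), γ₂₃(b₃), u₂}, b₃ ≤ max{γ₃₁(b₁), γ₃₂(b₂), u₃}, where the γ_{ij} are class-K functions satisfying the cyclic small-gain conditions γ_{i₁i₂}∘⋯∘γ_{i_r i₁}(s) < s for all s>0, all cycles with distinct indices among {1,2,3} of length 2 and 3. Then there exist functions of u₁,u₂,u₃ built from compositions and maxima of the γ_{ij} bounding each b_i; in particular b₁ ≤ max{γ₁₂(max{γ₂₃(u₃), u₂}), γ₁₃∘γ₃₂(max{γ₂₃(u₃), u₂}), γ₁₃(u₃), u₁}. -/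
/-!
Substituting the bound on `b₃` into those on `b₁` and `b₂` creates the self-loops `γ₁₃ ∘ γ₃₁`
and `γ₂₃ ∘ γ₃₂`, and a self-loop is removed by small gain: `b ≤ max (f b) d` with `f s < s`
for `s > 0` forces `b ≤ d`. Substituting the resulting bound on `b₂` into that on `b₁` leaves
the loops `γ₁₂ ∘ γ₂₁`, `γ₁₂ ∘ γ₂₃ ∘ γ₃₁`, `γ₁₃ ∘ γ₃₂ ∘ γ₂₁` and `γ₁₃ ∘ γ₃₂ ∘ γ₂₃ ∘ γ₃₁`; the
last is not a simple cycle, but `γ₃₂ ∘ γ₂₃ ≤ id` reduces it to `γ₁₃ ∘ γ₃₁`.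
-/

open NNReal

namespace ClassK

variable {γ : ℝ≥0 → ℝ≥0}

theorem monotone (h : ClassK γ) : Monotone γ := h.2.1.monotone

theorem map_zero (h : ClassK γ) : γ 0 = 0 := h.2.2

theorem map_max (h : ClassK γ) (a b : ℝ≥0) : γ (max a b) = max (γ a) (γ b) :=
  h.monotone.map_max

end ClassK

theorem le_of_le_max_of_lt_self {f : ℝ≥0 → ℝ≥0} (hf : ∀ s, 0 < s → f s < s) {b d : ℝ≥0}
    (h : b ≤ max (f b) d) : b ≤ d := by
  by_contra! hdb
  exact (max_lt (hf b (pos_of_gt hdb)) hdb).not_ge h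

theorem comp_le_self_of_comp_lt_self {f g : ℝ≥0 → ℝ≥0} (hf : Monotone f) (hg : g 0 = 0)
    (h : ∀ s, 0 < s → f (g s) < s) (x : ℝ≥0) : g (f x) ≤ x := by
  rcases eq_zero_or_pos (f x) with hfx | hfx
  · simp [hfx, hg]
  · by_contra! hx
    exact (hf hx.le).not_gt (h (f x) hfx)

theorem cyclic_smallgain_three_asymptotic_bound_general
    (γ₁₂ γ₁₃ γ₂₁ γ₂₃ γ₃₁ γ₃₂ : ℝ≥0 → ℝ≥0)
    (h₁₂ : ClassK γ₁₂) (h₁₃ : ClassK γ₁₃)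
    (h₂₃ : ClassK γ₂₃) (h₃₂ : ClassK γ₃₂)
    (hsg₁ : ∀ s : ℝ≥0, 0 < s → γ₁₂ (γ₂₁ s) < s)
    (hsg₂ : ∀ s : ℝ≥0, 0 < s → γ₁₃ (γ₃₁ s) < s)
    (hsg₃ : ∀ s : ℝ≥0, 0 < s → γ₂₃ (γ₃₂ s) < s)
    (hsg₄ : ∀ s : ℝ≥0, 0 < s → γ₁₂ (γ₂₃ (γ₃₁ s)) < s)
    (hsg₅ : ∀ s : ℝ≥0, 0 < s → γ₁₃ (γ₃₂ (γ₂₁ s)) < s)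
    (b₁ b₂ b₃ u₁ u₂ u₃ : ℝ≥0)
    (hb₁ : b₁ ≤ max (γ₁₂ b₂) (max (γ₁₃ b₃) u₁))
    (hb₂ : b₂ ≤ max (γ₂₁ b₁) (max (γ₂₃ b₃) u₂))
    (hb₃ : b₃ ≤ max (γ₃₁ b₁) (max (γ₃₂ b₂) u₃)) :
    b₁ ≤ max (γ₁₂ (max (γ₂₃ u₃) u₂))
          (max (γ₁₃ (γ₃₂ (max (γ₂₃ u₃) u₂))) (max (γ₁₃ u₃) u₁)) := by
  have hb₂' : b₂ ≤ max (max (γ₂₁ b₁) (γ₂₃ (γ₃₁ b₁))) (max (γ₂₃ u₃) u₂) := by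
    refine le_of_le_max_of_lt_self hsg₃ (hb₂.trans ?_)
    calc _ ≤ max (γ₂₁ b₁) (max (γ₂₃ (max (γ₃₁ b₁) (max (γ₃₂ b₂) u₃))) u₂) := by
          gcongr; exact h₂₃.monotone hb₃
      _ = _ := by simp only [h₂₃.map_max]; ac_rfl
  have hb₁' : b₁ ≤ max (max (γ₁₂ b₂) (γ₁₃ (γ₃₂ b₂))) (max (γ₁₃ u₃) u₁) := by
    refine le_of_le_max_of_lt_self hsg₂ (hb₁.trans ?_)
    calc _ ≤ max (γ₁₂ b₂) (max (γ₁₃ (max (γ₃₁ b₁) (max (γ₃₂ b₂) u₃))) u₁) := by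
          gcongr; exact h₁₃.monotone hb₃
      _ = _ := by simp only [h₁₃.map_max]; ac_rfl
  have hsg : ∀ s, 0 < s → max (γ₁₂ (max (γ₂₁ s) (γ₂₃ (γ₃₁ s))))
      (γ₁₃ (γ₃₂ (max (γ₂₁ s) (γ₂₃ (γ₃₁ s))))) < s := by
    intro s hs
    have h₃₂₂₃ := comp_le_self_of_comp_lt_self h₂₃.monotone h₃₂.map_zero hsg₃ (γ₃₁ s)
    simp only [h₁₂.map_max, h₁₃.map_max, h₃₂.map_max]
    exact max_lt (max_lt (hsg₁ s hs) (hsg₄ s hs))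
      (max_lt (hsg₅ s hs) ((h₁₃.monotone h₃₂₂₃).trans_lt (hsg₂ s hs)))
  refine le_of_le_max_of_lt_self hsg (hb₁'.trans ?_)
  calc _ ≤ max (max (γ₁₂ (max (max (γ₂₁ b₁) (γ₂₃ (γ₃₁ b₁))) (max (γ₂₃ u₃) u₂)))
          (γ₁₃ (γ₃₂ (max (max (γ₂₁ b₁) (γ₂₃ (γ₃₁ b₁))) (max (γ₂₃ u₃) u₂))))) (max (γ₁₃ u₃) u₁) := by
        gcongr
        · exact h₁₂.monotone hb₂'
        · exact h₁₃.monotone (h₃₂.monotone hb₂')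
    _ = _ := by simp only [h₁₂.map_max, h₁₃.map_max, h₃₂.map_max]; ac_rfl

theorem cyclic_smallgain_three_asymptotic_bound
    (γ₁₂ γ₁₃ γ₂₁ γ₂₃ γ₃₁ γ₃₂ : ℝ≥0 → ℝ≥0)
    (h₁₂ : ClassK γ₁₂) (h₁₃ : ClassK γ₁₃) (h₂₁ : ClassK γ₂₁)
    (h₂₃ : ClassK γ₂₃) (h₃₁ : ClassK γ₃₁) (h₃₂ : ClassK γ₃₂)
    (hsg₁ : ∀ s : ℝ≥0, 0 < s → γ₁₂ (γ₂₁ s) < s)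
    (hsg₂ : ∀ s : ℝ≥0, 0 < s → γ₁₃ (γ₃₁ s) < s)
    (hsg₃ : ∀ s : ℝ≥0, 0 < s → γ₂₃ (γ₃₂ s) < s)
    (hsg₄ : ∀ s : ℝ≥0, 0 < s → γ₁₂ (γ₂₃ (γ₃₁ s)) < s)
    (hsg₅ : ∀ s : ℝ≥0, 0 < s → γ₁₃ (γ₃₂ (γ₂₁ s)) < s)
    (b₁ b₂ b₃ u₁ u₂ u₃ : ℝ≥0)
    (hb₁ : b₁ ≤ max (γ₁₂ b₂) (max (γ₁₃ b₃) u₁))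
    (hb₂ : b₂ ≤ max (γ₂₁ b₁) (max (γ₂₃ b₃) u₂))
    (hb₃ : b₃ ≤ max (γ₃₁ b₁) (max (γ₃₂ b₂) u₃)) :
    b₁ ≤ max (γ₁₂ (max (γ₂₃ u₃) u₂))
          (max (γ₁₃ (γ₃₂ (max (γ₂₃ u₃) u₂))) (max (γ₁₃ u₃) u₁)) :=
  cyclic_smallgain_three_asymptotic_bound_general γ₁₂ γ₁₃ γ₂₁ γ₂₃ γ₃₁ γ₃₂ h₁₂ h₁₃ h₂₃ h₃₂ hsg₁ hsg₂
    hsg₃ hsg₄ hsg₅ b₁ b₂ b₃ u₁ u₂ u₃ hb₁ hb₂ hb₃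
end

section
/- Let γ₁₂ and γ₂₁ be class-K functions with γ₁₂∘γ₂₁(s) < s for all s > 0. Suppose continuous functions y₁, y₂ : [0,τ) → ℝ≥0 satisfy, for all t ∈ [0,τ): y₁(t) ≤ max{c, γ₁₂(sup_{s<t} y₂(s)), g₁} and y₂(t) ≤ max{c, γ₂₁(sup_{s<t} y₁(s)), g₂}, where c, g₁, g₂ ≥ 0 are constants. Then for all t ∈ [0,τ): y₁(t) ≤ max{c, γ₁₂(max{c, g₂}), g₁} and y₂(t) ≤ max{c, γ₂₁(max{c, g₁}), g₂}. -/
/-!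
Let `Mᵢ` be the supremum of `yᵢ` on `[0, t]`, finite by continuity. The gain estimates give
the circular bounds `M₁ ≤ max (max c g₁) (γ₁₂ M₂)` and `M₂ ≤ max (max c g₂) (γ₂₁ M₁)`.
Substituting the second into the first, the term `γ₁₂ (γ₂₁ M₁)` can never dominate, since it is
`< M₁` whenever `M₁ > 0`; this leaves `M₁ ≤ max (max c g₁) (γ₁₂ (max c g₂))`. As `γ₁₂` is
strictly increasing, the small-gain condition also holds with the roles of the gains swapped, which
gives the bound for `M₂` symmetrically.
-/

open NNReal

open Set

def SmallGain (γ₁₂ γ₂₁ : ℝ≥0 → ℝ≥0) : Prop := ∀ s : ℝ≥0, 0 < s → γ₁₂ (γ₂₁ s) < s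

namespace SmallGain

variable {γ₁₂ γ₂₁ : ℝ≥0 → ℝ≥0}

theorem swap (hsg : SmallGain γ₁₂ γ₂₁) (hγ₁₂ : StrictMono γ₁₂) : SmallGain γ₂₁ γ₁₂ :=
  fun s hs => hγ₁₂.lt_iff_lt.mp (hsg (γ₁₂ s) (zero_le.trans_lt (hγ₁₂ hs)))

theorem le_max_of_le_max (hsg : SmallGain γ₁₂ γ₂₁) (hγ₁₂ : Monotone γ₁₂) {a b S₁ S₂ : ℝ≥0}
    (h₁ : S₁ ≤ max a (γ₁₂ S₂)) (h₂ : S₂ ≤ max b (γ₂₁ S₁)) : S₁ ≤ max a (γ₁₂ b) := by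
  by_contra! h
  have hS₁ : S₁ ≤ max (max a (γ₁₂ b)) (γ₁₂ (γ₂₁ S₁)) := by
    rw [max_assoc, ← hγ₁₂.map_max]
    exact h₁.trans (max_le_max le_rfl (hγ₁₂ h₂))
  exact hS₁.not_gt (max_lt h (hsg S₁ (zero_le.trans_lt h)))

end SmallGain

theorem sSup_image_Icc_le_max_gain {y z : ℝ → ℝ≥0} {γ : ℝ≥0 → ℝ≥0} (hγ : Monotone γ)
    {t : ℝ} {c g M : ℝ≥0} (hz : ∀ s ∈ Icc 0 t, z s ≤ M)
    (hy : ∀ s ∈ Icc 0 t, y s ≤ max c (max (γ (⨆ u : Ico (0:ℝ) s, z u)) g)) :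
    sSup (y '' Icc 0 t) ≤ max (max c g) (γ M) := by
  refine csSup_le' ?_
  rintro _ ⟨s, hs, rfl⟩
  have hzM : (⨆ u : Ico (0:ℝ) s, z u) ≤ M :=
    ciSup_le' fun u => hz u ⟨u.2.1, u.2.2.le.trans hs.2⟩
  calc y s ≤ max c (max (γ (⨆ u : Ico (0:ℝ) s, z u)) g) := hy s hs
    _ ≤ max c (max (γ M) g) := by gcongr; exact hγ hzM
    _ = max (max c g) (γ M) := by ac_rfl

theorem trajectory_smallgain_two (γ₁₂ γ₂₁ : ℝ≥0 → ℝ≥0)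
    (h₁₂ : ClassK γ₁₂) (h₂₁ : ClassK γ₂₁)
    (hsg : ∀ s : ℝ≥0, 0 < s → γ₁₂ (γ₂₁ s) < s)
    (τ : EReal) (y₁ y₂ : ℝ → ℝ≥0) (c g₁ g₂ : ℝ≥0)
    (hy₁ : ContinuousOn y₁ {t : ℝ | 0 ≤ t ∧ (t : EReal) < τ})
    (hy₂ : ContinuousOn y₂ {t : ℝ | 0 ≤ t ∧ (t : EReal) < τ})
    (hb₁ : ∀ t : ℝ, 0 ≤ t → (t : EReal) < τ →
      y₁ t ≤ max c (max (γ₁₂ (⨆ s : Set.Ico (0:ℝ) t, y₂ s)) g₁))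
    (hb₂ : ∀ t : ℝ, 0 ≤ t → (t : EReal) < τ →
      y₂ t ≤ max c (max (γ₂₁ (⨆ s : Set.Ico (0:ℝ) t, y₁ s)) g₂)) :
    ∀ t : ℝ, 0 ≤ t → (t : EReal) < τ →
      y₁ t ≤ max c (max (γ₁₂ (max c g₂)) g₁) ∧
      y₂ t ≤ max c (max (γ₂₁ (max c g₁)) g₂) := by
  intro t ht htτ
  have hsub : Icc 0 t ⊆ {t : ℝ | 0 ≤ t ∧ (t : EReal) < τ} := fun s hs =>
    ⟨hs.1, (EReal.coe_le_coe_iff.mpr hs.2).trans_lt htτ⟩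
  set M₁ := sSup (y₁ '' Icc 0 t)
  set M₂ := sSup (y₂ '' Icc 0 t)
  have hle₁ : ∀ s ∈ Icc 0 t, y₁ s ≤ M₁ := fun s hs =>
    le_csSup (isCompact_Icc.bddAbove_image (hy₁.mono hsub)) (mem_image_of_mem _ hs)
  have hle₂ : ∀ s ∈ Icc 0 t, y₂ s ≤ M₂ := fun s hs =>
    le_csSup (isCompact_Icc.bddAbove_image (hy₂.mono hsub)) (mem_image_of_mem _ hs)
  have hM₁ : M₁ ≤ max (max c g₁) (γ₁₂ M₂) :=
    sSup_image_Icc_le_max_gain h₁₂.2.1.monotone hle₂ fun s hs => hb₁ s hs.1 (hsub hs).2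
  have hM₂ : M₂ ≤ max (max c g₂) (γ₂₁ M₁) :=
    sSup_image_Icc_le_max_gain h₂₁.2.1.monotone hle₁ fun s hs => hb₂ s hs.1 (hsub hs).2
  have ht' : t ∈ Icc 0 t := ⟨ht, le_rfl⟩
  constructor
  · calc y₁ t ≤ M₁ := hle₁ t ht'
      _ ≤ max (max c g₁) (γ₁₂ (max c g₂)) :=
        SmallGain.le_max_of_le_max hsg h₁₂.2.1.monotone hM₁ hM₂
      _ = max c (max (γ₁₂ (max c g₂)) g₁) := by ac_rfl
  · calc y₂ t ≤ M₂ := hle₂ t ht'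
      _ ≤ max (max c g₂) (γ₂₁ (max c g₁)) :=
        (SmallGain.swap hsg h₁₂.2.1).le_max_of_le_max h₂₁.2.1.monotone hM₂ hM₁
      _ = max c (max (γ₂₁ (max c g₁)) g₂) := by ac_rfl
end

section
/- Let {γ_{ij}}_{i≠j, 1≤i,j≤3} be class-K functions satisfying the cyclic small-gain conditions for all cycles of length 2 and 3 among indices {1,2,3}. Suppose continuous functions y₁, y₂, y₃ : [0,∞) → ℝ≥0 and constants c, u₁, u₂, u₃ ≥ 0 satisfy y_i(t) ≤ max_{j≠i}{c, γ_{ij}(sup_{s<t} y_j(s)), u_i} for all t ≥ 0 and each i. Then each y_i is bounded on [0,∞), with a bound depending only on c, u₁, u₂, u₃ and the functions γ_{ij} (via compositions and maxima). -/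
/-!
Fix `t ≥ 0`. The running maxima `Mᵢ = sup_{[0,t]} yᵢ` are finite by continuity and satisfy
`Mᵢ ≤ (c ⊔ uᵢ) ⊔ γᵢⱼ Mⱼ ⊔ γᵢₖ Mₖ`. Using the 2-cycle condition between `j` and `k` to eliminate
`Mⱼ` and `Mₖ` leaves `Mᵢ ≤ Bᵢ ⊔ H Mᵢ`, where `H` is the maximum of the four cycle gains through
`i`. Since `H < id` on `(0, ∞)`, this forces `Mᵢ ≤ Bᵢ`, and `Bᵢ` does not depend on `t`.
-/

open NNReal

open Set

def LtId (g : ℝ≥0 → ℝ≥0) : Prop := ∀ s, 0 < s → g s < s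

namespace LtId

variable {f g : ℝ≥0 → ℝ≥0}

theorem sup (hf : LtId f) (hg : LtId g) : LtId (f ⊔ g) :=
  fun s hs => max_lt (hf s hs) (hg s hs)

theorem comp_comm (h : LtId (f ∘ g)) (hf : StrictMono f) : LtId (g ∘ f) := by
  intro s hs
  have hfs : 0 < f s := zero_le.trans_lt (hf hs)
  exact hf.lt_iff_lt.mp (h (f s) hfs)

theorem le_of_le_max (h : LtId g) {x v : ℝ≥0} (hx : x ≤ max v (g x)) : x ≤ v := by
  by_contra! hvx
  have hxg : x ≤ g x := (le_max_iff.mp hx).resolve_left hvx.not_ge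
  exact (h x (zero_le.trans_lt hvx)).not_ge hxg

theorem le_max_of_feedback (h : LtId (f ∘ g)) (hf : Monotone f) {a b v w : ℝ≥0}
    (ha : a ≤ max v (f b)) (hb : b ≤ max w (g a)) : a ≤ max v (f w) :=
  h.le_of_le_max <| calc
    a ≤ max v (f (max w (g a))) := ha.trans (max_le_max le_rfl (hf hb))
    _ = max (max v (f w)) (f (g a)) := by rw [hf.map_max, max_assoc]

end LtId

structure SmallGainTriangle (γ₁₂ γ₁₃ γ₂₁ γ₂₃ γ₃₁ γ₃₂ : ℝ≥0 → ℝ≥0) : Prop where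
  strictMono₁₂ : StrictMono γ₁₂
  strictMono₁₃ : StrictMono γ₁₃
  strictMono₂₁ : StrictMono γ₂₁
  strictMono₂₃ : StrictMono γ₂₃
  strictMono₃₁ : StrictMono γ₃₁
  strictMono₃₂ : StrictMono γ₃₂
  ltId₁₂₁ : LtId (γ₁₂ ∘ γ₂₁)
  ltId₁₃₁ : LtId (γ₁₃ ∘ γ₃₁)
  ltId₂₃₂ : LtId (γ₂₃ ∘ γ₃₂)
  ltId₁₂₃₁ : LtId (γ₁₂ ∘ γ₂₃ ∘ γ₃₁)
  ltId₁₃₂₁ : LtId (γ₁₃ ∘ γ₃₂ ∘ γ₂₁)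

namespace SmallGainTriangle

variable {γ₁₂ γ₁₃ γ₂₁ γ₂₃ γ₃₁ γ₃₂ : ℝ≥0 → ℝ≥0}

/-- Relabelling `2 ↦ 1, 3 ↦ 2, 1 ↦ 3`; a cycle condition does not depend on the starting vertex. -/
theorem rotate (h : SmallGainTriangle γ₁₂ γ₁₃ γ₂₁ γ₂₃ γ₃₁ γ₃₂) :
    SmallGainTriangle γ₂₃ γ₂₁ γ₃₂ γ₃₁ γ₁₂ γ₁₃ where
  strictMono₁₂ := h.strictMono₂₃
  strictMono₁₃ := h.strictMono₂₁
  strictMono₂₁ := h.strictMono₃₂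
  strictMono₂₃ := h.strictMono₃₁
  strictMono₃₁ := h.strictMono₁₂
  strictMono₃₂ := h.strictMono₁₃
  ltId₁₂₁ := h.ltId₂₃₂
  ltId₁₃₁ := h.ltId₁₂₁.comp_comm h.strictMono₁₂
  ltId₂₃₂ := h.ltId₁₃₁.comp_comm h.strictMono₁₃
  ltId₁₂₃₁ := (h.ltId₁₂₃₁ : LtId (γ₁₂ ∘ (γ₂₃ ∘ γ₃₁))).comp_comm h.strictMono₁₂
  ltId₁₃₂₁ := LtId.comp_comm (f := γ₁₃ ∘ γ₃₂) h.ltId₁₃₂₁ (h.strictMono₁₃.comp h.strictMono₃₂)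

theorem le_bound (h : SmallGainTriangle γ₁₂ γ₁₃ γ₂₁ γ₂₃ γ₃₁ γ₃₂) {x₁ x₂ x₃ w₁ w₂ w₃ : ℝ≥0}
    (h₁ : x₁ ≤ max w₁ (max (γ₁₂ x₂) (γ₁₃ x₃)))
    (h₂ : x₂ ≤ max w₂ (max (γ₂₁ x₁) (γ₂₃ x₃)))
    (h₃ : x₃ ≤ max w₃ (max (γ₃₁ x₁) (γ₃₂ x₂))) :
    x₁ ≤ max w₁ (max (γ₁₂ (max w₂ (γ₂₃ w₃))) (γ₁₃ (max w₃ (γ₃₂ w₂)))) := by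
  have m₁₂ := h.strictMono₁₂.monotone
  have m₁₃ := h.strictMono₁₃.monotone
  have m₂₃ := h.strictMono₂₃.monotone
  have m₃₂ := h.strictMono₃₂.monotone
  have h₂' : x₂ ≤ max (max w₂ (γ₂₁ x₁)) (γ₂₃ (max w₃ (γ₃₁ x₁))) :=
    h.ltId₂₃₂.le_max_of_feedback m₂₃ (by rwa [← max_assoc] at h₂)
      (by rwa [← max_assoc] at h₃)
  have h₃' : x₃ ≤ max (max w₃ (γ₃₁ x₁)) (γ₃₂ (max w₂ (γ₂₁ x₁))) :=
    (h.ltId₂₃₂.comp_comm h.strictMono₂₃).le_max_of_feedback m₃₂ (by rwa [← max_assoc] at h₃)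
      (by rwa [← max_assoc] at h₂)
  refine ((h.ltId₁₂₁.sup h.ltId₁₂₃₁).sup (h.ltId₁₃₁.sup h.ltId₁₃₂₁)).le_of_le_max ?_
  calc x₁ ≤ max w₁ (max (γ₁₂ (max (max w₂ (γ₂₁ x₁)) (γ₂₃ (max w₃ (γ₃₁ x₁)))))
        (γ₁₃ (max (max w₃ (γ₃₁ x₁)) (γ₃₂ (max w₂ (γ₂₁ x₁)))))) :=
        h₁.trans (max_le_max le_rfl (max_le_max (m₁₂ h₂') (m₁₃ h₃')))
    _ = _ := by
      simp only [m₁₂.map_max, m₁₃.map_max, m₂₃.map_max, m₃₂.map_max, Pi.sup_apply,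
        Function.comp_apply]
      ac_rfl

theorem exists_bound (h : SmallGainTriangle γ₁₂ γ₁₃ γ₂₁ γ₂₃ γ₃₁ γ₃₂) (w₁ w₂ w₃ : ℝ≥0) :
    ∃ B₁ B₂ B₃ : ℝ≥0, ∀ x₁ x₂ x₃ : ℝ≥0,
      x₁ ≤ max w₁ (max (γ₁₂ x₂) (γ₁₃ x₃)) → x₂ ≤ max w₂ (max (γ₂₁ x₁) (γ₂₃ x₃)) →
      x₃ ≤ max w₃ (max (γ₃₁ x₁) (γ₃₂ x₂)) → x₁ ≤ B₁ ∧ x₂ ≤ B₂ ∧ x₃ ≤ B₃ :=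
  ⟨_, _, _, fun x₁ x₂ x₃ h₁ h₂ h₃ =>
    ⟨h.le_bound h₁ h₂ h₃,
      h.rotate.le_bound (by rwa [max_comm (γ₂₁ x₁)] at h₂) (by rwa [max_comm (γ₃₁ x₁)] at h₃) h₁,
      h.rotate.rotate.le_bound h₃ (by rwa [max_comm (γ₁₂ x₂)] at h₁)
        (by rwa [max_comm (γ₂₁ x₁)] at h₂)⟩⟩

end SmallGainTriangle

/-- `sup_{0 ≤ s ≤ t} y s`, with junk value `0` when `y` is unbounded on `[0, t]`. -/
noncomputable def runningMax (y : ℝ → ℝ≥0) (t : ℝ) : ℝ≥0 := sSup (y '' Icc 0 t)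

section runningMax

variable {y : ℝ → ℝ≥0} {r t : ℝ}

theorem le_runningMax (hy : ContinuousOn y (Ici 0)) (hr : r ∈ Icc 0 t) : y r ≤ runningMax y t :=
  le_csSup (isCompact_Icc.bddAbove_image (hy.mono Icc_subset_Ici_self)) (mem_image_of_mem y hr)

theorem iSup_Ico_le_runningMax (hy : ContinuousOn y (Ici 0)) (hrt : r ≤ t) :
    ⨆ s : Ico (0 : ℝ) r, y s ≤ runningMax y t :=
  ciSup_le' fun s => le_runningMax hy ⟨s.2.1, s.2.2.le.trans hrt⟩

theorem runningMax_le {B : ℝ≥0} (h : ∀ r ∈ Icc 0 t, y r ≤ B) : runningMax y t ≤ B :=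
  csSup_le' (forall_mem_image.mpr h)

theorem runningMax_le_max_gain {z₁ z₂ : ℝ → ℝ≥0} {g₁ g₂ : ℝ≥0 → ℝ≥0} {c u : ℝ≥0}
    (hz₁ : ContinuousOn z₁ (Ici 0)) (hz₂ : ContinuousOn z₂ (Ici 0))
    (hg₁ : Monotone g₁) (hg₂ : Monotone g₂)
    (hy : ∀ t : ℝ, 0 ≤ t → y t ≤
      max c (max (g₁ (⨆ s : Ico (0:ℝ) t, z₁ s)) (max (g₂ (⨆ s : Ico (0:ℝ) t, z₂ s)) u))) :
    runningMax y t ≤ max (max c u) (max (g₁ (runningMax z₁ t)) (g₂ (runningMax z₂ t))) := by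
  refine runningMax_le fun r hr => (hy r hr.1).trans ?_
  calc _ = max (max c u) (max (g₁ (⨆ s : Ico (0:ℝ) r, z₁ s)) (g₂ (⨆ s : Ico (0:ℝ) r, z₂ s))) := by
        ac_rfl
    _ ≤ _ := max_le_max le_rfl (max_le_max (hg₁ (iSup_Ico_le_runningMax hz₁ hr.2))
        (hg₂ (iSup_Ico_le_runningMax hz₂ hr.2)))

end runningMax

theorem trajectory_smallgain_three_bounded
    (γ₁₂ γ₁₃ γ₂₁ γ₂₃ γ₃₁ γ₃₂ : ℝ≥0 → ℝ≥0)
    (h₁₂ : ClassK γ₁₂) (h₁₃ : ClassK γ₁₃) (h₂₁ : ClassK γ₂₁)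
    (h₂₃ : ClassK γ₂₃) (h₃₁ : ClassK γ₃₁) (h₃₂ : ClassK γ₃₂)
    (hsg₁ : ∀ s : ℝ≥0, 0 < s → γ₁₂ (γ₂₁ s) < s)
    (hsg₂ : ∀ s : ℝ≥0, 0 < s → γ₁₃ (γ₃₁ s) < s)
    (hsg₃ : ∀ s : ℝ≥0, 0 < s → γ₂₃ (γ₃₂ s) < s)
    (hsg₄ : ∀ s : ℝ≥0, 0 < s → γ₁₂ (γ₂₃ (γ₃₁ s)) < s)
    (hsg₅ : ∀ s : ℝ≥0, 0 < s → γ₁₃ (γ₃₂ (γ₂₁ s)) < s)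
    (y₁ y₂ y₃ : ℝ → ℝ≥0) (c u₁ u₂ u₃ : ℝ≥0)
    (hy₁ : ContinuousOn y₁ (Set.Ici 0)) (hy₂ : ContinuousOn y₂ (Set.Ici 0))
    (hy₃ : ContinuousOn y₃ (Set.Ici 0))
    (hb₁ : ∀ t : ℝ, 0 ≤ t → y₁ t ≤
      max c (max (γ₁₂ (⨆ s : Set.Ico (0:ℝ) t, y₂ s))
        (max (γ₁₃ (⨆ s : Set.Ico (0:ℝ) t, y₃ s)) u₁)))
    (hb₂ : ∀ t : ℝ, 0 ≤ t → y₂ t ≤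
      max c (max (γ₂₁ (⨆ s : Set.Ico (0:ℝ) t, y₁ s))
        (max (γ₂₃ (⨆ s : Set.Ico (0:ℝ) t, y₃ s)) u₂)))
    (hb₃ : ∀ t : ℝ, 0 ≤ t → y₃ t ≤
      max c (max (γ₃₁ (⨆ s : Set.Ico (0:ℝ) t, y₁ s))
        (max (γ₃₂ (⨆ s : Set.Ico (0:ℝ) t, y₂ s)) u₃))) :
    ∃ B₁ B₂ B₃ : ℝ≥0,
      (∀ t : ℝ, 0 ≤ t → y₁ t ≤ B₁) ∧
      (∀ t : ℝ, 0 ≤ t → y₂ t ≤ B₂) ∧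
      (∀ t : ℝ, 0 ≤ t → y₃ t ≤ B₃) := by
  have hγ : SmallGainTriangle γ₁₂ γ₁₃ γ₂₁ γ₂₃ γ₃₁ γ₃₂ :=
    ⟨h₁₂.2.1, h₁₃.2.1, h₂₁.2.1, h₂₃.2.1, h₃₁.2.1, h₃₂.2.1, hsg₁, hsg₂, hsg₃, hsg₄, hsg₅⟩
  obtain ⟨B₁, B₂, B₃, hB⟩ := hγ.exists_bound (max c u₁) (max c u₂) (max c u₃)
  have hM (t : ℝ) : runningMax y₁ t ≤ B₁ ∧ runningMax y₂ t ≤ B₂ ∧ runningMax y₃ t ≤ B₃ :=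
    hB _ _ _
      (runningMax_le_max_gain hy₂ hy₃ h₁₂.2.1.monotone h₁₃.2.1.monotone hb₁)
      (runningMax_le_max_gain hy₁ hy₃ h₂₁.2.1.monotone h₂₃.2.1.monotone hb₂)
      (runningMax_le_max_gain hy₁ hy₂ h₃₁.2.1.monotone h₃₂.2.1.monotone hb₃)
  exact ⟨B₁, B₂, B₃, fun t ht => (le_runningMax hy₁ ⟨ht, le_rfl⟩).trans (hM t).1,
    fun t ht => (le_runningMax hy₂ ⟨ht, le_rfl⟩).trans (hM t).2.1,
    fun t ht => (le_runningMax hy₃ ⟨ht, le_rfl⟩).trans (hM t).2.2⟩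
end
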